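/- Let O be an order in a quaternion algebra B over ℚ, and let u, φ ∈ O be two elements that do not commute. Then the ℤ-submodule Λ generated by 1, u, φ, uφ is an order in B, and its reduced discriminant satisfies discrd(Λ)² = disc(Λ) where disc(Λ) = (1/16)·(Δ(u)Δ(φ) - (Trd(u)Trd(φ) - 2Trd(u·φ̄))²)² ; in particular discrd(Λ) = (1/4)·|Δ(u)Δ(φ) - (Trd(u)Trd(φ) - 2Trd(u·φ̄))²| ≤ (1/4)·Δ(u)·Δ(φ) when Δ(u), Δ(φ) < 0. -/

import Mathlib

open Quaternion

/-- The reduced trace on `H(a,b)`: `Trd(α) = α + ᾱ = 2·re α` as a scalar. -/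
def trd {a b : ℚ} (x : ℍ[ℚ, a, b]) : ℚ := 2 * x.re

/-- The reduced norm on `H(a,b)`: the scalar with `α·ᾱ = Nrd(α)·1`. -/
def nrd {a b : ℚ} (x : ℍ[ℚ, a, b]) : ℚ := (x * star x).re

/-- The discriminant form `Δ(α) = Trd(α)² - 4·Nrd(α)`. -/
def disc {a b : ℚ} (x : ℍ[ℚ, a, b]) : ℚ := (trd x) ^ 2 - 4 * nrd x

/-- The Gram matrix `(Trd(βᵢ βⱼ))_{i,j}` of a system `β : Fin 4 → H(a,b)`. -/
def gram {a b : ℚ} (β : Fin 4 → ℍ[ℚ, a, b]) : Matrix (Fin 4) (Fin 4) ℚ :=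
  Matrix.of fun i j => trd (β i * β j)

/-! The reduced traces and norms of `u`, `φ`, `uφ` are integers: an element integral over `ℤ` has
a minimal polynomial over `ℚ` with integer coefficients (Gauss), and for a non-scalar quaternion
this polynomial is `X² - Trd(x) X + Nrd(x)`. The quadratic relation `x² = Trd(x) x - Nrd(x)` and
its polarisation `φu = Trd(uφ) - Trd(u)Trd(φ) + Trd(φ) u + Trd(u) φ - uφ` then show that
`ℤ⟨1, u, φ, uφ⟩` is closed under multiplication. A direct computation gives `det Gram = -E²/16`
with `E = 4 Nrd(uφ - φu)`, which is positive in a definite algebra since `u` and `φ` do not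
commute. Hence the Gram matrix is nondegenerate, so `1, u, φ, uφ` is a `ℚ`-basis of `B`, and
`|E| = E = Δ(u)Δ(φ) - (Trd(u)Trd(φ) - 2Trd(uφ̄))² ≤ Δ(u)Δ(φ)`. -/

open Polynomial

theorem linearIndependent_of_det_apply_mul_ne_zero {K A ι : Type*} [CommRing K] [NoZeroDivisors K]
    [Ring A] [Algebra K A] [Fintype ι] [DecidableEq ι] (τ : A →ₗ[K] K) {v : ι → A}
    (h : (Matrix.of fun i j => τ (v i * v j)).det ≠ 0) : LinearIndependent K v := by
  refine Fintype.linearIndependent_iff.mpr fun g hg =>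
    congrFun (Matrix.eq_zero_of_vecMul_eq_zero h ?_)
  ext j
  simpa [Matrix.vecMul, dotProduct, Finset.sum_mul, smul_mul_assoc] using
    congrArg (fun x => τ (x * v j)) hg

theorem Matrix.det_fin_four {R : Type*} [CommRing R] (A : Matrix (Fin 4) (Fin 4) R) :
    A.det =
      A 0 0 * (A 1 1 * (A 2 2 * A 3 3 - A 2 3 * A 3 2) - A 1 2 * (A 2 1 * A 3 3 - A 2 3 * A 3 1)
          + A 1 3 * (A 2 1 * A 3 2 - A 2 2 * A 3 1))
      - A 0 1 * (A 1 0 * (A 2 2 * A 3 3 - A 2 3 * A 3 2) - A 1 2 * (A 2 0 * A 3 3 - A 2 3 * A 3 0)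
          + A 1 3 * (A 2 0 * A 3 2 - A 2 2 * A 3 0))
      + A 0 2 * (A 1 0 * (A 2 1 * A 3 3 - A 2 3 * A 3 1) - A 1 1 * (A 2 0 * A 3 3 - A 2 3 * A 3 0)
          + A 1 3 * (A 2 0 * A 3 1 - A 2 1 * A 3 0))
      - A 0 3 * (A 1 0 * (A 2 1 * A 3 2 - A 2 2 * A 3 1) - A 1 1 * (A 2 0 * A 3 2 - A 2 2 * A 3 0)
          + A 1 2 * (A 2 0 * A 3 1 - A 2 1 * A 3 0)) := by
  simp [Matrix.det_succ_row_zero, Fin.sum_univ_succ, Fin.succAbove]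
  ring

theorem minpoly_coeff_mem_bot_of_isIntegral {B : Type*} [Ring B] [Algebra ℚ B] {x : B}
    (hx : IsIntegral ℤ x) (n : ℕ) : (minpoly ℚ x).coeff n ∈ (⊥ : Subring ℚ) := by
  have hmonic := minpoly.monic (hx.tower_top (A := ℚ))
  obtain ⟨p, hp, hpx⟩ := hx
  have hdvd : minpoly ℚ x ∣ p.map (algebraMap ℤ ℚ) :=
    minpoly.dvd ℚ x (by rwa [aeval_map_algebraMap])
  obtain ⟨g, hg⟩ := IsIntegrallyClosed.eq_map_mul_C_of_dvd ℚ hp hdvd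
  rw [hmonic.leadingCoeff, C_1, mul_one] at hg
  exact Subring.mem_bot.mpr ⟨g.coeff n, by simp [← hg]⟩

section Span

variable {A : Type*} [Ring A] {u φ : A}

theorem mul_mem_span_one_mul
    (huu : u * u ∈ Submodule.span ℤ {1, u, φ, u * φ})
    (huuφ : u * (u * φ) ∈ Submodule.span ℤ {1, u, φ, u * φ})
    (hφu : φ * u ∈ Submodule.span ℤ {1, u, φ, u * φ})
    (hφφ : φ * φ ∈ Submodule.span ℤ {1, u, φ, u * φ})
    (hφuφ : φ * (u * φ) ∈ Submodule.span ℤ {1, u, φ, u * φ})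
    {x y : A} (hx : x ∈ Submodule.span ℤ {1, u, φ, u * φ})
    (hy : y ∈ Submodule.span ℤ {1, u, φ, u * φ}) :
    x * y ∈ Submodule.span ℤ {1, u, φ, u * φ} := by
  set N := Submodule.span ℤ ({1, u, φ, u * φ} : Set A)
  have left_mul_mem (g : A) (hg1 : g ∈ N) (hgu : g * u ∈ N) (hgφ : g * φ ∈ N)
      (hguφ : g * (u * φ) ∈ N) : ∀ y ∈ N, g * y ∈ N := by
    refine fun y hy => (Submodule.span_le (p := N.comap (LinearMap.mulLeft ℤ g))).mpr ?_ hy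
    simp only [Set.insert_subset_iff, Set.singleton_subset_iff, SetLike.mem_coe,
      Submodule.mem_comap, LinearMap.mulLeft_apply, mul_one]
    exact ⟨hg1, hgu, hgφ, hguφ⟩
  have hu := left_mul_mem u (Submodule.subset_span (by simp)) huu
    (Submodule.subset_span (by simp)) huuφ
  have hφ := left_mul_mem φ (Submodule.subset_span (by simp)) hφu hφφ hφuφ
  induction hx using Submodule.span_induction with
  | mem x hx =>
    simp only [Set.mem_insert_iff, Set.mem_singleton_iff] at hx
    rcases hx with h | h | h | h <;> rw [h]
    · rwa [one_mul]
    · exact hu y hy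
    · exact hφ y hy
    · rw [mul_assoc]
      exact hu _ (hφ y hy)
  | zero => rw [zero_mul]; exact N.zero_mem
  | add x x' _ _ hx hx' => rw [add_mul]; exact N.add_mem hx hx'
  | smul n x _ hx => rw [smul_mul_assoc]; exact N.smul_mem n hx

end Span

section Quaternion

variable {a b : ℚ}

theorem nrd_eq (x : ℍ[ℚ, a, b]) :
    nrd x = x.re ^ 2 - a * x.imI ^ 2 - b * x.imJ ^ 2 + a * b * x.imK ^ 2 := by
  simp [nrd, QuaternionAlgebra.re_mul]; ring

theorem trd_algebraMap (r : ℚ) : trd (algebraMap ℚ ℍ[ℚ, a, b] r) = 2 * r := rfl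

theorem nrd_algebraMap (r : ℚ) : nrd (algebraMap ℚ ℍ[ℚ, a, b] r) = r ^ 2 := by
  simp [nrd_eq]

theorem mul_self_eq (x : ℍ[ℚ, a, b]) : x * x = trd x • x - nrd x • (1 : ℍ[ℚ, a, b]) := by
  ext <;> simp [trd, nrd_eq] <;> ring

theorem mul_swap_eq (x y : ℍ[ℚ, a, b]) :
    y * x = (trd (x * y) - trd x * trd y) • (1 : ℍ[ℚ, a, b]) + trd y • x + trd x • y - x * y := by
  ext <;> simp [trd] <;> ring

theorem mul_mul_self_eq (x y : ℍ[ℚ, a, b]) :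
    y * (x * y) = (-(trd x * nrd y)) • (1 : ℍ[ℚ, a, b]) + nrd y • x + trd (x * y) • y := by
  ext <;> simp [trd, nrd_eq] <;> ring

theorem minpoly_eq_of_notMem_range {x : ℍ[ℚ, a, b]}
    (hx : x ∉ (algebraMap ℚ ℍ[ℚ, a, b]).range) :
    minpoly ℚ x = X ^ 2 - C (trd x) * X + C (nrd x) := by
  have hmonic : (X ^ 2 - C (trd x) * X + C (nrd x)).Monic := by monicity!
  have hdeg : (X ^ 2 - C (trd x) * X + C (nrd x)).natDegree = 2 := by compute_degree!
  have haeval : aeval x (X ^ 2 - C (trd x) * X + C (nrd x)) = 0 := by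
    simp [sq, mul_self_eq x, Algebra.smul_def]
  have hint : IsIntegral ℚ x := ⟨_, hmonic, haeval⟩
  refine (eq_of_monic_of_dvd_of_natDegree_le (minpoly.monic hint) hmonic
    (minpoly.dvd ℚ x haeval) ?_).symm
  rw [hdeg]
  exact (minpoly.two_le_natDegree_iff hint).mpr hx

theorem trd_mem_bot_and_nrd_mem_bot {x : ℍ[ℚ, a, b]} (hx : IsIntegral ℤ x) :
    trd x ∈ (⊥ : Subring ℚ) ∧ nrd x ∈ (⊥ : Subring ℚ) := by
  by_cases hxr : x ∈ (algebraMap ℚ ℍ[ℚ, a, b]).range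
  · obtain ⟨r, rfl⟩ := hxr
    have hr : r ∈ (⊥ : Subring ℚ) := by
      have h := minpoly_coeff_mem_bot_of_isIntegral hx 0
      rw [minpoly.eq_X_sub_C] at h
      simpa using neg_mem h
    rw [trd_algebraMap, nrd_algebraMap]
    exact ⟨mul_mem (Subring.mem_bot.mpr ⟨2, rfl⟩) hr, pow_mem hr 2⟩
  · have h := minpoly_coeff_mem_bot_of_isIntegral hx
    rw [minpoly_eq_of_notMem_range hxr] at h
    exact ⟨by simpa using neg_mem (h 1), by simpa using h 0⟩

theorem nrd_pos (ha : a < 0) (hb : b < 0) {x : ℍ[ℚ, a, b]} (hx : x ≠ 0) : 0 < nrd x := by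
  have hab : 0 < a * b := mul_pos_of_neg_of_neg ha hb
  have hI := mul_nonneg (neg_nonneg.2 ha.le) (sq_nonneg x.imI)
  have hJ := mul_nonneg (neg_nonneg.2 hb.le) (sq_nonneg x.imJ)
  have hK := mul_nonneg hab.le (sq_nonneg x.imK)
  rw [nrd_eq]
  by_contra! h
  refine hx (QuaternionAlgebra.ext ?_ ?_ ?_ ?_) <;>
    refine pow_eq_zero_iff two_ne_zero |>.mp (le_antisymm ?_ (sq_nonneg _)) <;>
    nlinarith [sq_nonneg x.re]

theorem disc_mul_disc_sub_sq (u φ : ℍ[ℚ, a, b]) :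
    disc u * disc φ - (trd u * trd φ - 2 * trd (u * star φ)) ^ 2 = 4 * nrd (u * φ - φ * u) := by
  simp only [disc, trd, nrd_eq, QuaternionAlgebra.re_mul, QuaternionAlgebra.imI_mul,
    QuaternionAlgebra.imJ_mul, QuaternionAlgebra.imK_mul, QuaternionAlgebra.re_star,
    QuaternionAlgebra.imI_star, QuaternionAlgebra.imJ_star, QuaternionAlgebra.imK_star,
    QuaternionAlgebra.re_sub, QuaternionAlgebra.imI_sub, QuaternionAlgebra.imJ_sub,
    QuaternionAlgebra.imK_sub]
  ring

theorem det_gram_one_mul (u φ : ℍ[ℚ, a, b]) :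
    (gram ![(1 : ℍ[ℚ, a, b]), u, φ, u * φ]).det =
      -(disc u * disc φ - (trd u * trd φ - 2 * trd (u * star φ)) ^ 2) ^ 2 / 16 := by
  rw [Matrix.det_fin_four]
  simp only [gram, Matrix.of_apply, Matrix.cons_val_zero, Matrix.cons_val_one, Matrix.cons_val_two,
    Matrix.cons_val_three, Matrix.head_cons, Matrix.tail_cons, disc, trd, nrd,
    QuaternionAlgebra.re_mul, QuaternionAlgebra.imI_mul, QuaternionAlgebra.imJ_mul,
    QuaternionAlgebra.imK_mul, QuaternionAlgebra.re_star, QuaternionAlgebra.imI_star,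
    QuaternionAlgebra.imJ_star, QuaternionAlgebra.imK_star, QuaternionAlgebra.re_one,
    QuaternionAlgebra.imI_one, QuaternionAlgebra.imJ_one, QuaternionAlgebra.imK_one]
  ring

theorem mul_mem_span_of_isIntegral {u φ : ℍ[ℚ, a, b]} (hu : IsIntegral ℤ u)
    (hφ : IsIntegral ℤ φ) (huφ : IsIntegral ℤ (u * φ)) {x y : ℍ[ℚ, a, b]}
    (hx : x ∈ Submodule.span ℤ {1, u, φ, u * φ}) (hy : y ∈ Submodule.span ℤ {1, u, φ, u * φ}) :
    x * y ∈ Submodule.span ℤ {1, u, φ, u * φ} := by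
  set N := Submodule.span ℤ ({1, u, φ, u * φ} : Set ℍ[ℚ, a, b])
  have smul_mem {q : ℚ} {z : ℍ[ℚ, a, b]} (hq : q ∈ (⊥ : Subring ℚ)) (hz : z ∈ N) : q • z ∈ N := by
    obtain ⟨n, rfl⟩ := Subring.mem_bot.mp hq
    rw [Int.cast_smul_eq_zsmul]
    exact N.smul_mem n hz
  have h1 : 1 ∈ N := Submodule.subset_span (by simp)
  have hu' : u ∈ N := Submodule.subset_span (by simp)
  have hφ' : φ ∈ N := Submodule.subset_span (by simp)
  have huφ' : u * φ ∈ N := Submodule.subset_span (by simp)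
  obtain ⟨tu, nu⟩ := trd_mem_bot_and_nrd_mem_bot hu
  obtain ⟨tφ, nφ⟩ := trd_mem_bot_and_nrd_mem_bot hφ
  have tuφ := (trd_mem_bot_and_nrd_mem_bot huφ).1
  refine mul_mem_span_one_mul ?_ ?_ ?_ ?_ ?_ hx hy
  · rw [mul_self_eq]
    exact sub_mem (smul_mem tu hu') (smul_mem nu h1)
  · rw [← mul_assoc, mul_self_eq, sub_mul, smul_mul_assoc, smul_mul_assoc, one_mul]
    exact sub_mem (smul_mem tu huφ') (smul_mem nu hφ')
  · rw [mul_swap_eq u φ]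
    exact sub_mem (add_mem (add_mem (smul_mem (sub_mem tuφ (mul_mem tu tφ)) h1)
      (smul_mem tφ hu')) (smul_mem tu hφ')) huφ'
  · rw [mul_self_eq]
    exact sub_mem (smul_mem tφ hφ') (smul_mem nφ h1)
  · rw [mul_mul_self_eq]
    exact add_mem (add_mem (smul_mem (neg_mem (mul_mem tu nφ)) h1) (smul_mem nφ hu'))
      (smul_mem tuφ hφ')

end Quaternion

theorem stmt8_general (a b : ℚ) (ha : a < 0) (hb : b < 0) (O : Subring ℍ[ℚ, a, b])
    (hfg : (AddSubgroup.toIntSubmodule O.toAddSubgroup).FG)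
    (u φ : ℍ[ℚ, a, b]) (hu : u ∈ O) (hφ : φ ∈ O) (hcomm : u * φ ≠ φ * u) :
    (∃ S : Subring ℍ[ℚ, a, b],
        (S : Set ℍ[ℚ, a, b]) =
          (Submodule.span ℤ ({1, u, φ, u * φ} : Set ℍ[ℚ, a, b]) : Set ℍ[ℚ, a, b]) ∧
        LinearIndependent ℤ ![(1 : ℍ[ℚ, a, b]), u, φ, u * φ] ∧
        Submodule.span ℚ ((S : Set ℍ[ℚ, a, b])) = ⊤) ∧
      |(gram ![(1 : ℍ[ℚ, a, b]), u, φ, u * φ]).det| =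
        (1 / 16) * (disc u * disc φ - (trd u * trd φ - 2 * trd (u * star φ)) ^ 2) ^ 2 ∧
      (disc u < 0 → disc φ < 0 →
        (1 / 4) * |disc u * disc φ - (trd u * trd φ - 2 * trd (u * star φ)) ^ 2| ≤
          (1 / 4) * (disc u * disc φ)) := by
  have hint : ∀ x ∈ O, IsIntegral ℤ x := fun x hx =>
    IsIntegral.of_mem_of_fg (subalgebraOfSubring O) hfg x hx
  have hE : 0 < disc u * disc φ - (trd u * trd φ - 2 * trd (u * star φ)) ^ 2 := by
    rw [disc_mul_disc_sub_sq]
    exact mul_pos four_pos (nrd_pos ha hb (sub_ne_zero.mpr hcomm))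
  have hdet : (gram ![(1 : ℍ[ℚ, a, b]), u, φ, u * φ]).det ≠ 0 := by
    rw [det_gram_one_mul]
    exact div_ne_zero (neg_ne_zero.mpr (pow_ne_zero 2 hE.ne')) (by norm_num)
  have hli : LinearIndependent ℚ ![(1 : ℍ[ℚ, a, b]), u, φ, u * φ] :=
    linearIndependent_of_det_apply_mul_ne_zero ((2 : ℚ) • QuaternionAlgebra.reₗ a 0 b) hdet
  refine ⟨⟨((Submodule.span ℤ _).toSubalgebra (Submodule.subset_span (by simp))
      fun x y => mul_mem_span_of_isIntegral (hint u hu) (hint φ hφ)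
        (hint _ (O.mul_mem hu hφ))).toSubring, rfl, hli.restrict_scalars' ℤ, ?_⟩, ?_, ?_⟩
  · have hspan := hli.span_eq_top_of_card_eq_finrank (by simp [QuaternionAlgebra.finrank_eq_four])
    simp only [Matrix.range_cons, Matrix.range_empty, Set.union_empty, Set.singleton_union] at hspan
    change Submodule.span ℚ ((Submodule.span ℤ _ : Submodule ℤ ℍ[ℚ, a, b]) : Set ℍ[ℚ, a, b]) = ⊤
    rwa [Submodule.span_span_of_tower]
  · rw [det_gram_one_mul, neg_div, abs_neg, abs_of_nonneg (by positivity)]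
    ring
  · intro _ _
    rw [abs_of_pos hE]
    linarith [sq_nonneg (trd u * trd φ - 2 * trd (u * star φ))]

/-- Let `O` be an order in a (definite) quaternion algebra `B = H(a,b)` over `ℚ`, and let
`u, φ ∈ O` be non-commuting.  Then `Λ = ℤ⟨1, u, φ, uφ⟩` is an order in `B` (a subring of `B`
which is a full lattice), and with `E = Δ(u)Δ(φ) - (Trd(u)Trd(φ) - 2Trd(u φ̄))²` its
discriminant satisfies `disc(Λ) = |det Gram| = (1/16)·E²` — so
`discrd(Λ) = (1/4)·|E|` — and `(1/4)·|E| ≤ (1/4)·Δ(u)·Δ(φ)` when `Δ(u), Δ(φ) < 0`. -/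
theorem stmt8 (a b : ℚ) (ha : a < 0) (hb : b < 0) (O : Subring ℍ[ℚ, a, b])
    (hfg : (AddSubgroup.toIntSubmodule O.toAddSubgroup).FG)
    (hfull : Submodule.span ℚ (O : Set ℍ[ℚ, a, b]) = ⊤)
    (u φ : ℍ[ℚ, a, b]) (hu : u ∈ O) (hφ : φ ∈ O) (hcomm : u * φ ≠ φ * u) :
    (∃ S : Subring ℍ[ℚ, a, b],
        (S : Set ℍ[ℚ, a, b]) =
          (Submodule.span ℤ ({1, u, φ, u * φ} : Set ℍ[ℚ, a, b]) : Set ℍ[ℚ, a, b]) ∧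
        LinearIndependent ℤ ![(1 : ℍ[ℚ, a, b]), u, φ, u * φ] ∧
        Submodule.span ℚ ((S : Set ℍ[ℚ, a, b])) = ⊤) ∧
      |(gram ![(1 : ℍ[ℚ, a, b]), u, φ, u * φ]).det| =
        (1 / 16) * (disc u * disc φ - (trd u * trd φ - 2 * trd (u * star φ)) ^ 2) ^ 2 ∧
      (disc u < 0 → disc φ < 0 →
        (1 / 4) * |disc u * disc φ - (trd u * trd φ - 2 * trd (u * star φ)) ^ 2| ≤
          (1 / 4) * (disc u * disc φ)) :=
  stmt8_general a b ha hb O hfg u φ hu hφ hcomm
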